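/- arXiv:1904.12920 — 2 statements merged into one kernel-verified Lean document; each statement's English description precedes it below -/
import Mathlib

section
/- Let m > 1 divide n and let π be an (n,m)-piecewise affine permutation with parameters (a, b, c). Write n = n₁n₂ with rad(n₁) | n/m and gcd(n₂, n/m) = 1. For each i ∈ [1,m] let A_i ∈ [1,n₁] satisfy A_i·a_{i-1} ≡ 1 (mod n₁). Then for each i the system x ≡ c_{i-1} − A_i c_i (mod m), x ≡ −A_i b_{i-1} (mod n₁) has a solution B_i ∈ [1,n], and the triple (A, B, C) with A = (A_m, …, A_1), B = (B_m, …, B_1), C = (c_m, …, c_1) is (n,m)-admissible and induces the inverse permutation π^{-1}. -/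
/-- `psi k x` is the representative of `x` mod `k` in `[1, k]`. -/
def psi (k x : ℕ) : ℕ := if x % k = 0 then k else x % k

/-- `π` is an `(n,m)`-piecewise affine permutation of `[1,n]` with parameters
`(a, b, c)`: it permutes `[1,n]` (and is the identity elsewhere), the entries of
`a, b` lie in `[1,n]`, the entries of `c` form a permutation of `[1,m]`, and for
`x ∈ [1,n]` with `Ψ_m(x) = c_i` one has `π(x) = Ψ_n(a_i x + b_i)` and
`Ψ_m(π(x)) = c_{i+1}`, indices cyclic modulo `m`. -/
def IsPAP (n m : ℕ) [NeZero m] (a b c : Fin m → ℕ) (π : ℕ → ℕ) : Prop :=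
  Set.BijOn π (Set.Icc 1 n) (Set.Icc 1 n) ∧
  (∀ x : ℕ, x ∉ Set.Icc 1 n → π x = x) ∧
  (∀ i, a i ∈ Set.Icc 1 n) ∧ (∀ i, b i ∈ Set.Icc 1 n) ∧
  (∀ i, c i ∈ Set.Icc 1 m) ∧ Function.Injective c ∧
  ∀ x ∈ Set.Icc 1 n, ∀ i, psi m x = c i →
    π x = psi n (a i * x + b i) ∧ psi m (π x) = c (i + 1)

lemma psi_mod (k x : ℕ) : psi k x % k = x % k := by
  unfold psi; split <;> simp [*, Nat.mod_self]

lemma psi_mem (k x : ℕ) (hk : 0 < k) : psi k x ∈ Set.Icc 1 k := by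
  unfold psi; split
  · exact ⟨hk, le_refl k⟩
  · exact ⟨Nat.one_le_iff_ne_zero.2 ‹_›, (Nat.mod_lt x hk).le⟩

lemma mem_icc_mod_inj {k u v : ℕ} (hu : u ∈ Set.Icc 1 k) (hv : v ∈ Set.Icc 1 k)
    (h : u % k = v % k) : u = v := by
  obtain ⟨hu1, hu2⟩ := hu; obtain ⟨hv1, hv2⟩ := hv
  rcases lt_or_eq_of_le hu2 with h1 | h1 <;> rcases lt_or_eq_of_le hv2 with h2 | h2
  · rwa [Nat.mod_eq_of_lt h1, Nat.mod_eq_of_lt h2] at h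
  · rw [Nat.mod_eq_of_lt h1, h2, Nat.mod_self] at h; omega
  · rw [Nat.mod_eq_of_lt h2, h1, Nat.mod_self] at h; omega
  · omega

lemma psi_eq {k x t : ℕ} (hk : 0 < k) (ht : t ∈ Set.Icc 1 k) (h : x % k = t % k) :
    psi k x = t :=
  mem_icc_mod_inj (psi_mem k x hk) ht (by rw [psi_mod]; exact h)

lemma psi_of_mem {k t : ℕ} (ht : t ∈ Set.Icc 1 k) : psi k t = t :=
  psi_eq (Nat.lt_of_lt_of_le Nat.zero_lt_one (le_trans ht.1 ht.2)) ht rfl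

lemma fin_rev_add_one {m : ℕ} [NeZero m] (hm : 1 < m) (j : Fin m) :
    Fin.rev (j + 1) = Fin.rev j - 1 := by
  have hj := j.isLt
  ext
  rw [Fin.rev, Fin.rev, Fin.add_def, Fin.sub_def]
  have e1 : (1 : Fin m).val = 1 := by rw [Fin.val_one']; exact Nat.mod_eq_of_lt hm
  simp only [e1]
  rcases Nat.lt_or_ge (j.val + 1) m with h1 | h1
  · rw [Nat.mod_eq_of_lt h1, Nat.mod_eq_sub_mod (by omega), Nat.mod_eq_of_lt (by omega)]
    omega
  · rw [show j.val + 1 = m by omega, Nat.mod_self, Nat.mod_eq_of_lt (by omega)]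
    omega

/-- The inverse of an `(n,m)`-p.a.p. is an `(n,m)`-p.a.p. with explicitly
computable parameters: `A_i a_{i-1} ≡ 1 (mod n₁)`, `B_i` solves the system
`x ≡ c_{i-1} - A_i c_i (mod m)`, `x ≡ -A_i b_{i-1} (mod n₁)`, and the reversed
triple `(A, B, C)` induces `π⁻¹`. -/
theorem pap_inverse (n m n₁ n₂ : ℕ) [NeZero m] (hm : 1 < m) (hmn : m ∣ n)
    (hsplit : n = n₁ * n₂) (hrad : ∀ p : ℕ, p.Prime → p ∣ n₁ → p ∣ n / m)
    (hcop : Nat.Coprime n₂ (n / m))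
    (a b c : Fin m → ℕ) (π : ℕ → ℕ) (hpap : IsPAP n m a b c π)
    (A : Fin m → ℕ) (hA : ∀ i, A i ∈ Set.Icc 1 n₁ ∧ A i * a (i - 1) ≡ 1 [MOD n₁]) :
    ∃ B : Fin m → ℕ,
      (∀ i, B i ∈ Set.Icc 1 n ∧
        ((B i : ℤ) ≡ (c (i - 1) : ℤ) - (A i : ℤ) * (c i : ℤ) [ZMOD (m : ℤ)]) ∧
        ((B i : ℤ) ≡ -((A i : ℤ) * (b (i - 1) : ℤ)) [ZMOD (n₁ : ℤ)])) ∧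
      ∃ π' : ℕ → ℕ,
        IsPAP n m (A ∘ Fin.rev) (B ∘ Fin.rev) (c ∘ Fin.rev) π' ∧
        ∀ x ∈ Set.Icc 1 n, π' (π x) = x ∧ π (π' x) = x := by
  classical
  obtain ⟨hbij, hout, ha, hb, hc, hcinj, hmain⟩ := hpap
  have hm0 : 0 < m := by omega
  have hn1pos : 0 < n₁ := by
    have h := (hA 0).1
    rw [Set.mem_Icc] at h
    omega
  have hnpos : 0 < n := by
    rcases Nat.eq_zero_or_pos n with h | h
    · rw [h, Nat.zero_div, Nat.coprime_zero_right] at hcop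
      rw [h, hcop, mul_one] at hsplit; omega
    · exact h
  have hmlen : m ≤ n := Nat.le_of_dvd hnpos hmn
  have hn1dvd : n₁ ∣ n := ⟨n₂, hsplit⟩
  have hn2dvd : n₂ ∣ n := ⟨n₁, by rw [hsplit, mul_comm]⟩
  have hndiv : m * (n / m) = n := Nat.mul_div_cancel' hmn
  have hcop12 : Nat.Coprime n₁ n₂ := by
    by_contra hco
    obtain ⟨p, hp, hpd⟩ := Nat.exists_prime_and_dvd hco
    have hp1 : p ∣ n₁ := hpd.trans (Nat.gcd_dvd_left _ _)
    have hp2 : p ∣ n₂ := hpd.trans (Nat.gcd_dvd_right _ _)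
    have hpnm : p ∣ n / m := hrad p hp hp1
    have : p ∣ 1 := hcop ▸ Nat.dvd_gcd hp2 hpnm
    exact hp.one_lt.ne' (Nat.dvd_one.1 this)
  have hn2m : n₂ ∣ m := hcop.dvd_of_dvd_mul_right (by rw [hndiv]; exact hn2dvd)
  -- surjectivity of c onto [1, m]
  have hcsurj : ∀ t ∈ Set.Icc 1 m, ∃ i, c i = t := by
    have hbj : Function.Bijective
        (fun i : Fin m => (⟨c i, by simpa [Finset.mem_Icc] using hc i⟩ : Finset.Icc 1 m)) := by
      rw [Fintype.bijective_iff_injective_and_card]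
      constructor
      · intro i j hij
        exact hcinj (by simpa [Subtype.ext_iff] using hij)
      · simp [Fintype.card_coe, Nat.card_Icc]
    intro t ht
    obtain ⟨i, hi⟩ := hbj.2 ⟨t, by simpa [Finset.mem_Icc] using ht⟩
    exact ⟨i, by simpa [Subtype.ext_iff] using hi⟩
  -- key congruence : c (i+1) ≡ a i * c i + b i  (mod m)
  have hkey : ∀ i : Fin m, (c (i + 1) : ℤ) ≡ (a i : ℤ) * c i + b i [ZMOD (m : ℤ)] := by
    intro i
    have hx : (c i : ℕ) ∈ Set.Icc 1 n := ⟨(hc i).1, le_trans (hc i).2 hmlen⟩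
    obtain ⟨h1, h2⟩ := hmain (c i) hx i (psi_of_mem (hc i))
    have hmod : (c (i + 1)) % m = (a i * c i + b i) % m := by
      rw [← h2, psi_mod, h1, ← Nat.mod_mod_of_dvd _ hmn, psi_mod, Nat.mod_mod_of_dvd _ hmn]
    have := Int.natCast_modEq_iff.2 hmod
    push_cast at this
    exact this
  -- A i * a (i-1) ≡ 1 (mod n₁) in ℤ
  have hAa : ∀ i : Fin m, (A i : ℤ) * (a (i - 1) : ℤ) ≡ 1 [ZMOD (n₁ : ℤ)] := by
    intro i
    have := Int.natCast_modEq_iff.2 (hA i).2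
    push_cast at this
    exact this
  -- construction of B
  have hBex : ∀ i : Fin m, ∃ Bi : ℕ, Bi ∈ Set.Icc 1 n ∧
      ((Bi : ℤ) ≡ (c (i - 1) : ℤ) - (A i : ℤ) * (c i : ℤ) [ZMOD (m : ℤ)]) ∧
      ((Bi : ℤ) ≡ -((A i : ℤ) * (b (i - 1) : ℤ)) [ZMOD (n₁ : ℤ)]) := by
    intro i
    have hu : True := trivial
    set d : ℕ := Nat.gcd m n₁ with hd
    have hdm : (d : ℤ) ∣ (m : ℤ) := Int.natCast_dvd_natCast.2 (Nat.gcd_dvd_left _ _)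
    have hdn1 : (d : ℤ) ∣ (n₁ : ℤ) := Int.natCast_dvd_natCast.2 (Nat.gcd_dvd_right _ _)
    -- compatibility  u ≡ v (mod d)
    have hcompat : ((c (i - 1) : ℤ) - (A i : ℤ) * (c i : ℤ)) ≡
        -((A i : ℤ) * (b (i - 1) : ℤ)) [ZMOD (d : ℤ)] := by
      have h1 : (c i : ℤ) ≡ (a (i - 1) : ℤ) * c (i - 1) + b (i - 1) [ZMOD (d : ℤ)] := by
        have := (hkey (i - 1)).of_dvd hdm
        rwa [sub_add_cancel] at this
      have h2 : (A i : ℤ) * (a (i - 1) : ℤ) ≡ 1 [ZMOD (d : ℤ)] := (hAa i).of_dvd hdn1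
      rw [← ZMod.intCast_eq_intCast_iff] at h1 h2 ⊢
      push_cast at h1 h2 ⊢
      linear_combination (-(A i : ZMod d)) * h1 + (-(c (i - 1) : ZMod d)) * h2
    -- nat residues
    have hmZ : (m : ℤ) ≠ 0 := by exact_mod_cast hm0.ne'
    have hn1Z : (n₁ : ℤ) ≠ 0 := by exact_mod_cast hn1pos.ne'
    set u' : ℕ := (((c (i - 1) : ℤ) - (A i : ℤ) * (c i : ℤ)) % (m : ℤ)).toNat with hu'
    set v' : ℕ := ((-((A i : ℤ) * (b (i - 1) : ℤ))) % (n₁ : ℤ)).toNat with hv'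
    have hu'c : (u' : ℤ) ≡ (c (i - 1) : ℤ) - (A i : ℤ) * (c i : ℤ) [ZMOD (m : ℤ)] := by
      rw [hu', Int.toNat_of_nonneg (Int.emod_nonneg _ hmZ)]
      exact Int.emod_emod_of_dvd _ dvd_rfl
    have hv'c : (v' : ℤ) ≡ -((A i : ℤ) * (b (i - 1) : ℤ)) [ZMOD (n₁ : ℤ)] := by
      rw [hv', Int.toNat_of_nonneg (Int.emod_nonneg _ hn1Z)]
      exact Int.emod_emod_of_dvd _ dvd_rfl
    have hcompatN : u' ≡ v' [MOD d] := by
      rw [← Int.natCast_modEq_iff]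
      calc (u' : ℤ) ≡ _ [ZMOD (d : ℤ)] := hu'c.of_dvd hdm
        _ ≡ -((A i : ℤ) * (b (i - 1) : ℤ)) [ZMOD (d : ℤ)] := hcompat
        _ ≡ (v' : ℤ) [ZMOD (d : ℤ)] := (hv'c.of_dvd hdn1).symm
    obtain ⟨k, hk1, hk2⟩ := Nat.chineseRemainder' (n := m) (m := n₁) hcompatN
    refine ⟨psi n k, psi_mem n k hnpos, ?_, ?_⟩
    · calc ((psi n k : ℕ) : ℤ) ≡ (k : ℤ) [ZMOD (m : ℤ)] :=
          (Int.natCast_modEq_iff.2 (Nat.ModEq.of_dvd hmn (psi_mod n k)))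
        _ ≡ (u' : ℤ) [ZMOD (m : ℤ)] := Int.natCast_modEq_iff.2 hk1
        _ ≡ _ [ZMOD (m : ℤ)] := hu'c
    · calc ((psi n k : ℕ) : ℤ) ≡ (k : ℤ) [ZMOD (n₁ : ℤ)] :=
          (Int.natCast_modEq_iff.2 (Nat.ModEq.of_dvd hn1dvd (psi_mod n k)))
        _ ≡ (v' : ℤ) [ZMOD (n₁ : ℤ)] := Int.natCast_modEq_iff.2 hk2
        _ ≡ _ [ZMOD (n₁ : ℤ)] := hv'c
  choose B hB1 hB2 hB3 using hBex
  refine ⟨B, fun i => ⟨hB1 i, hB2 i, hB3 i⟩, ?_⟩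
  -- the inverse map
  set g : ℕ → ℕ := Function.invFunOn π (Set.Icc 1 n) with hg
  have hinv : Set.InvOn g π (Set.Icc 1 n) (Set.Icc 1 n) := hbij.invOn_invFunOn
  have hgmaps : Set.MapsTo g (Set.Icc 1 n) (Set.Icc 1 n) := by
    intro y hy
    obtain ⟨x, hx, hxy⟩ := hbij.surjOn hy
    exact Function.invFunOn_mem ⟨x, hx, hxy⟩
  have hπg : ∀ y ∈ Set.Icc 1 n, π (g y) = y := fun y hy => hinv.2 hy
  have hgπ : ∀ x ∈ Set.Icc 1 n, g (π x) = x := fun x hx => hinv.1 hx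
  set π' : ℕ → ℕ := fun y => if y ∈ Set.Icc 1 n then g y else y with hπ'
  have hπ'eq : ∀ y ∈ Set.Icc 1 n, π' y = g y := fun y hy => if_pos hy
  have hgbij : Set.BijOn g (Set.Icc 1 n) (Set.Icc 1 n) :=
    Set.InvOn.bijOn hinv.symm hgmaps hbij.mapsTo
  have hπ'bij : Set.BijOn π' (Set.Icc 1 n) (Set.Icc 1 n) :=
    hgbij.congr (fun y hy => (hπ'eq y hy).symm)
  -- the key inversion congruence
  have hmaininv : ∀ y ∈ Set.Icc 1 n, ∀ i : Fin m, psi m y = c i →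
      π' y = psi n (A i * y + B i) ∧ psi m (π' y) = c (i - 1) := by
    intro y hy i hpsiy
    have hxS : g y ∈ Set.Icc 1 n := hgmaps hy
    set x : ℕ := g y with hx
    have hπx : π x = y := hπg y hy
    have hπ'y : π' y = x := hπ'eq y hy
    obtain ⟨k, hk⟩ := hcsurj (psi m x) (psi_mem m x hm0)
    obtain ⟨h1, h2⟩ := hmain x hxS k hk.symm
    have hceq : c (k + 1) = c i := by rw [← h2, hπx, hpsiy]
    have hki : k = i - 1 := eq_sub_iff_add_eq.2 (hcinj hceq)
    subst hki
    -- congruences in ℤ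
    have hyx : (y : ℤ) ≡ (a (i - 1) : ℤ) * x + b (i - 1) [ZMOD (n : ℤ)] := by
      have : y % n = (a (i - 1) * x + b (i - 1)) % n := by rw [← hπx, h1, psi_mod]
      have := Int.natCast_modEq_iff.2 this
      push_cast at this; exact this
    have hxm : (x : ℤ) ≡ (c (i - 1) : ℤ) [ZMOD (m : ℤ)] := by
      have : x % m = (c (i - 1) : ℕ) % m := by rw [hk, psi_mod]
      exact Int.natCast_modEq_iff.2 this
    have hym : (y : ℤ) ≡ (c i : ℤ) [ZMOD (m : ℤ)] := by
      have : y % m = (c i : ℕ) % m := by rw [← hpsiy, psi_mod]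
      exact Int.natCast_modEq_iff.2 this
    -- mod n₁
    have g1 : ((A i : ℤ) * y + B i) ≡ (x : ℤ) [ZMOD (n₁ : ℤ)] := by
      have e1 := hyx.of_dvd (Int.natCast_dvd_natCast.2 hn1dvd)
      have e2 := hB3 i
      have e3 := hAa i
      rw [← ZMod.intCast_eq_intCast_iff] at e1 e2 e3 ⊢
      push_cast at e1 e2 e3 ⊢
      linear_combination (A i : ZMod n₁) * e1 + e2 + (x : ZMod n₁) * e3
    -- mod n₂ (via mod m)
    have g2 : ((A i : ℤ) * y + B i) ≡ (x : ℤ) [ZMOD (n₂ : ℤ)] := by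
      have gm : ((A i : ℤ) * y + B i) ≡ (x : ℤ) [ZMOD (m : ℤ)] := by
        have e2 := hB2 i
        rw [← ZMod.intCast_eq_intCast_iff] at hym hxm e2 ⊢
        push_cast at hym hxm e2 ⊢
        linear_combination (A i : ZMod m) * hym + e2 + hxm.symm
      exact gm.of_dvd (Int.natCast_dvd_natCast.2 hn2m)
    have gn : ((A i : ℤ) * y + B i) ≡ (x : ℤ) [ZMOD (n : ℤ)] := by
      have := (Int.modEq_and_modEq_iff_modEq_mul
        (by simpa using hcop12)).1 ⟨g1, g2⟩
      have hcast : ((n₁ : ℤ) * n₂) = (n : ℤ) := by rw [hsplit]; push_cast; ring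
      rwa [hcast] at this
    have gnN : (A i * y + B i) % n = x % n := by
      have : ((A i * y + B i : ℕ) : ℤ) ≡ (x : ℤ) [ZMOD (n : ℤ)] := by push_cast; exact gn
      exact Int.natCast_modEq_iff.1 this
    constructor
    · rw [hπ'y, (psi_eq hnpos hxS gnN : psi n (A i * y + B i) = x)]
    · rw [hπ'y]; exact hk.symm
  refine ⟨π', ⟨hπ'bij, fun x hx => if_neg hx, ?_, fun i => hB1 _, fun i => hc _,
      hcinj.comp Fin.rev_injective, ?_⟩, ?_⟩
  · intro i
    exact ⟨(hA _).1.1, le_trans (hA _).1.2 (Nat.le_of_dvd hnpos hn1dvd)⟩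
  · intro y hy j hpsiy
    obtain ⟨e1, e2⟩ := hmaininv y hy (Fin.rev j) hpsiy
    refine ⟨e1, ?_⟩
    rw [e2, Function.comp_apply, fin_rev_add_one hm j]
  · intro x hx
    constructor
    · rw [hπ'eq (π x) (hbij.mapsTo hx), hgπ x hx]
    · rw [hπ'eq x hx, hπg x hx]
end

section
/- Let m > 2 divide n and suppose π is a 2-reducible (n,m)-piecewise affine permutation with 2-reduced parameters (a₀, a, b₀, b). Then b ≡ b₀ (mod m). -/
/-- `π` is a 2-reducible `(n,m)`-p.a.p. with 2-reduced parameters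
`(a₀, a, b₀, b)`: it is an `(n,m)`-p.a.p. and on `[1,n]` it is given by
`π(x) = Ψ_n(a₀x + b₀)` when `m ∣ x` and `π(x) = Ψ_n(ax + b)` otherwise. -/
def IsPAP2 (n m : ℕ) [NeZero m] (a₀ a b₀ b : ℕ) (π : ℕ → ℕ) : Prop :=
  (∃ av bv cv : Fin m → ℕ, IsPAP n m av bv cv π) ∧
  ∀ x ∈ Set.Icc 1 n,
    (m ∣ x → π x = psi n (a₀ * x + b₀)) ∧ (¬ m ∣ x → π x = psi n (a * x + b))

lemma psi_modEq (k y : ℕ) : psi k y ≡ y [MOD k] := by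
  unfold psi
  split
  · rename_i h
    show k % k = y % k
    simp [Nat.mod_self, h]
  · show y % k % k = y % k
    exact Nat.mod_mod_of_dvd _ dvd_rfl

lemma psi_eq_self {k y : ℕ} (_hk : k ≠ 0) (h : y ∈ Set.Icc 1 k) : psi k y = y := by
  obtain ⟨h1, h2⟩ := h
  unfold psi
  split
  · rename_i h0
    have := Nat.le_of_dvd (by omega) (Nat.dvd_of_mod_eq_zero h0)
    omega
  · rename_i h0
    have hlt : y < k := by
      rcases lt_or_eq_of_le h2 with h | h
      · exact h
      · exact absurd (h ▸ Nat.mod_self k) h0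
    exact Nat.mod_eq_of_lt hlt

lemma psi_cast {k : ℕ} (y : ℕ) : ((psi k y : ℕ) : ZMod k) = (y : ZMod k) :=
  (ZMod.natCast_eq_natCast_iff _ _ _).2 (psi_modEq k y)

/-- The 2-reduced parameters of a 2-reducible `(n,m)`-p.a.p. satisfy
`b ≡ b₀ (mod m)`. -/
theorem pap2_b_congr (n m : ℕ) [NeZero m] (hm : 2 < m) (hmn : m ∣ n)
    (a₀ a b₀ b : ℕ) (ha₀ : a₀ ∈ Set.Icc 1 n) (ha : a ∈ Set.Icc 1 n)
    (hb₀ : b₀ ∈ Set.Icc 1 n) (hb : b ∈ Set.Icc 1 n)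
    (π : ℕ → ℕ) (hpap : IsPAP2 n m a₀ a b₀ b π) :
    b ≡ b₀ [MOD m] := by
  obtain ⟨⟨av, bv, cv, hbij, hid, hav, hbv, hcv, hcinj, hkey⟩, hred⟩ := hpap
  have hm0 : m ≠ 0 := by omega
  have hn1 : 1 ≤ n := hb.1.trans hb.2
  have hmn' : m ≤ n := Nat.le_of_dvd (by omega) hmn
  -- cast from mod n congruences to mod m
  have psi_cast_n : ∀ y : ℕ, ((psi n y : ℕ) : ZMod m) = (y : ZMod m) := fun y =>
    (ZMod.natCast_eq_natCast_iff _ _ _).2 ((psi_modEq n y).of_dvd hmn)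
  -- the residue map of the cycle vector
  set C : Fin m → ZMod m := fun i => ((cv i : ℕ) : ZMod m) with hC
  have hCinj : Function.Injective C := by
    intro i j h
    apply hcinj
    have hmod : cv i % m = cv j % m := (ZMod.natCast_eq_natCast_iff _ _ _).1 h
    have h1 := psi_eq_self hm0 (hcv i)
    have h2 := psi_eq_self hm0 (hcv j)
    rw [← h1, ← h2]
    unfold psi
    rw [hmod]
  have hCbij : Function.Bijective C := by
    rw [Fintype.bijective_iff_injective_and_card]
    exact ⟨hCinj, by simp [ZMod.card]⟩
  -- the successor map
  set g : ZMod m → ZMod m :=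
    fun t => if t = 0 then (b₀ : ZMod m) else (a : ZMod m) * t + (b : ZMod m) with hg
  have hstep : ∀ i : Fin m, g (C i) = C (i + 1) := by
    intro i
    have hx1 : cv i ∈ Set.Icc 1 m := hcv i
    have hxn : cv i ∈ Set.Icc 1 n := ⟨hx1.1, hx1.2.trans hmn'⟩
    have hpsix : psi m (cv i) = cv i := psi_eq_self hm0 hx1
    obtain ⟨hπx, hπmod⟩ := hkey (cv i) hxn i hpsix
    have hC1 : C (i + 1) = ((π (cv i) : ℕ) : ZMod m) := by
      rw [hC]; dsimp only; rw [← hπmod, psi_cast]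
    by_cases hdvd : m ∣ cv i
    · have hx0 : C i = 0 := (ZMod.natCast_eq_zero_iff _ _).2 hdvd
      have hπ : π (cv i) = psi n (a₀ * cv i + b₀) := (hred (cv i) hxn).1 hdvd
      rw [hC1, hπ, psi_cast_n, hg]
      have : ((cv i : ℕ) : ZMod m) = 0 := hx0
      push_cast
      rw [this]
      simp [hx0]
    · have hx0 : C i ≠ 0 := fun h => hdvd ((ZMod.natCast_eq_zero_iff _ _).1 h)
      have hπ : π (cv i) = psi n (a * cv i + b) := (hred (cv i) hxn).2 hdvd
      rw [hC1, hπ, psi_cast_n, hg]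
      simp only [if_neg hx0]
      push_cast
      rfl
  have hgsurj : Function.Surjective g := by
    intro y
    obtain ⟨j, hj⟩ := hCbij.2 y
    exact ⟨C (j - 1), by rw [hstep, sub_add_cancel, hj]⟩
  have hginj : Function.Injective g := Finite.injective_iff_surjective.2 hgsurj
  have hg0 : g 0 = (b₀ : ZMod m) := if_pos rfl
  rw [← ZMod.natCast_eq_natCast_iff]
  by_contra hne
  -- there is t ≠ 0 with a*t = 0 in ZMod m
  obtain ⟨t, ht⟩ := hgsurj (b : ZMod m)
  have ht0 : t ≠ 0 := by
    intro h
    rw [h, hg0] at ht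
    exact hne ht.symm
  have hat : (a : ZMod m) * t = 0 := by
    have : (a : ZMod m) * t + b = b := by
      rw [hg] at ht
      simp only [if_neg ht0] at ht
      exact ht
    have := add_right_cancel (b := (b : ZMod m)) (a := (a : ZMod m) * t) (c := 0)
      (by simpa using this)
    simpa using this
  -- pick s with s ≠ 0 and s + t ≠ 0
  have hs : ∃ s : ZMod m, s ≠ 0 ∧ s + t ≠ 0 := by
    by_contra h
    push_neg at h
    have hsub : (Finset.univ : Finset (ZMod m)) ⊆ {0, -t} := by
      intro s _
      by_cases h0 : s = 0
      · simp [h0]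
      · have := h s h0
        have : s = -t := by linear_combination this
        simp [this]
    have hcard := Finset.card_le_card hsub
    have h2 : ({0, -t} : Finset (ZMod m)).card ≤ 2 :=
      (Finset.card_insert_le _ _).trans (by simp)
    rw [Finset.card_univ, ZMod.card] at hcard
    omega
  obtain ⟨s, hs0, hst0⟩ := hs
  have : g s = g (s + t) := by
    rw [hg]
    simp only [if_neg hs0, if_neg hst0]
    rw [mul_add, hat, add_zero]
  have := hginj this
  have ht0' : t = 0 := by linear_combination -this
  exact ht0 ht0'
end
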